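/- Let V be a finite-dimensional real vector space and U : V^3 → ℝ a trilinear map satisfying ξ_{1/2}·U = U, where ξ_{1/2} = (1/3)(id + (1/2)(2 3) + (1/2)(1 2) − (1/2)(1 2 3) − (1/2)(1 3 2) − (1 3)). Then y_t*(U⊗w) = 0 for every linear functional w on V. -/

import Mathlib

/-- Action of a group ring element `a ∈ ℝ[S_r]` on an `r`-multilinear map:
`(aT)(v₁,…,v_r) = Σ_p a(p)·T(v_{p(1)},…,v_{p(r)})`. -/
noncomputable def gact {V : Type} [AddCommGroup V] [Module ℝ V] {r : ℕ}
    (a : MonoidAlgebra ℝ (Equiv.Perm (Fin r)))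
    (T : MultilinearMap ℝ (fun _ : Fin r => V) ℝ) :
    MultilinearMap ℝ (fun _ : Fin r => V) ℝ :=
  ∑ p : Equiv.Perm (Fin r), a.coeff p • T.domDomCongr p
/-- Pointwise action of a group ring element `a ∈ ℝ[S_r]` on a function
`T : V^r → ℝ`: `(aT)(v₁,…,v_r) = Σ_p a(p)·T(v_{p(1)},…,v_{p(r)})`. -/
noncomputable def fact {V : Type} [AddCommGroup V] [Module ℝ V] {r : ℕ}
    (a : MonoidAlgebra ℝ (Equiv.Perm (Fin r)))
    (T : (Fin r → V) → ℝ) : (Fin r → V) → ℝ :=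
  fun v => ∑ p : Equiv.Perm (Fin r), a.coeff p * T (fun i => v (p i))
/-- The star map `a* := Σ_p a(p)·p⁻¹` on the group ring `ℝ[S_r]`. -/
noncomputable def astar {r : ℕ} (a : MonoidAlgebra ℝ (Equiv.Perm (Fin r))) :
    MonoidAlgebra ℝ (Equiv.Perm (Fin r)) :=
  MonoidAlgebra.ofCoeff (Finsupp.equivFunOnFinite.symm (fun p => a.coeff p⁻¹))
/-- The Young symmetrizer `y_t = Σ_{p∈H_t} Σ_{q∈V_t} sign(q)·(p∘q)` of the tableau with
rows `{1,3}`, `{2,4}` (indices `0`-based in `Fin 4`):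
`H_t = {id, (1 3), (2 4), (1 3)(2 4)}`, `V_t = {id, (1 2), (3 4), (1 2)(3 4)}`. -/
noncomputable def yt : MonoidAlgebra ℝ (Equiv.Perm (Fin 4)) :=
  (MonoidAlgebra.single 1 1 + MonoidAlgebra.single (Equiv.swap 0 2) 1 +
     MonoidAlgebra.single (Equiv.swap 1 3) 1 +
     MonoidAlgebra.single (Equiv.swap 0 2 * Equiv.swap 1 3) 1) *
  (MonoidAlgebra.single 1 1 - MonoidAlgebra.single (Equiv.swap 0 1) 1 -
     MonoidAlgebra.single (Equiv.swap 2 3) 1 +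
     MonoidAlgebra.single (Equiv.swap 0 1 * Equiv.swap 2 3) 1)
/-- `ξ_ν := (1/3)(id + ν·(2 3) + (1−ν)·(1 2) − ν·(1 2 3) + (ν−1)·(1 3 2) − (1 3)) ∈ ℝ[S_3]`,
with `0`-based indices in `Fin 3`; `finRotate 3` is the cycle `(1 2 3)`. -/
noncomputable def xi (ν : ℝ) : MonoidAlgebra ℝ (Equiv.Perm (Fin 3)) :=
  (1/3 : ℝ) • (MonoidAlgebra.single 1 1 + MonoidAlgebra.single (Equiv.swap 1 2) ν +
    MonoidAlgebra.single (Equiv.swap 0 1) (1 - ν) - MonoidAlgebra.single (finRotate 3) ν +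
    MonoidAlgebra.single (finRotate 3)⁻¹ (ν - 1) - MonoidAlgebra.single (Equiv.swap 0 2) 1)

/-!
The hypothesis `ξ_{1/2} U = U` amounts to one linear relation `K(x, y, z)` among the six
argument permutations of `U`. Since `H_t` and `V_t` are groups of involutions,
`y_t* = Σ_{q ∈ V_t} sign(q) q · Σ_{p ∈ H_t} p`, so `y_t*(U ⊗ w)` is a sum of sixteen terms.
Grouped by the argument that `w` receives, each group of four is a third of a combination
of instances of `K`.
-/

open MonoidAlgebra

section

variable {V : Type} [AddCommGroup V] [Module ℝ V] {r : ℕ}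

lemma fact_add (a b : MonoidAlgebra ℝ (Equiv.Perm (Fin r))) (T : (Fin r → V) → ℝ)
    (v : Fin r → V) : fact (a + b) T v = fact a T v + fact b T v := by
  simp only [fact, coeff_add, Finsupp.add_apply, add_mul, Finset.sum_add_distrib]

lemma fact_sub (a b : MonoidAlgebra ℝ (Equiv.Perm (Fin r))) (T : (Fin r → V) → ℝ)
    (v : Fin r → V) : fact (a - b) T v = fact a T v - fact b T v := by
  simp only [fact, coeff_sub, Finsupp.sub_apply, sub_mul, Finset.sum_sub_distrib]

lemma fact_smul (c : ℝ) (a : MonoidAlgebra ℝ (Equiv.Perm (Fin r))) (T : (Fin r → V) → ℝ)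
    (v : Fin r → V) : fact (c • a) T v = c * fact a T v := by
  simp only [fact, coeff_smul_apply, smul_eq_mul, mul_assoc, Finset.mul_sum]

lemma fact_single (p : Equiv.Perm (Fin r)) (c : ℝ) (T : (Fin r → V) → ℝ) (v : Fin r → V) :
    fact (single p c) T v = c * T (v ∘ p) := by
  simp [fact, coeff_single, Finsupp.single_apply, ite_mul, Function.comp_def]

lemma gact_apply (a : MonoidAlgebra ℝ (Equiv.Perm (Fin r)))
    (T : MultilinearMap ℝ (fun _ : Fin r => V) ℝ) (v : Fin r → V) :
    gact a T v = fact a T v := by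
  simp [gact, fact]

lemma coeff_astar (a : MonoidAlgebra ℝ (Equiv.Perm (Fin r))) (p : Equiv.Perm (Fin r)) :
    (astar a).coeff p = a.coeff p⁻¹ := rfl

lemma astar_add (a b : MonoidAlgebra ℝ (Equiv.Perm (Fin r))) :
    astar (a + b) = astar a + astar b := by
  ext p; simp only [coeff_astar, coeff_add, Finsupp.add_apply]

lemma astar_sub (a b : MonoidAlgebra ℝ (Equiv.Perm (Fin r))) :
    astar (a - b) = astar a - astar b := by
  ext p; simp only [coeff_astar, coeff_sub, Finsupp.sub_apply]

lemma astar_single (p : Equiv.Perm (Fin r)) (c : ℝ) :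
    astar (single p c) = single p⁻¹ c := by
  ext q
  simp only [coeff_astar, coeff_single, Finsupp.single_apply, inv_eq_iff_eq_inv]

lemma comp_eq_vec_three {α : Type*} (v : Fin 3 → α) (σ : Fin 3 → Fin 3) :
    v ∘ σ = ![v (σ 0), v (σ 1), v (σ 2)] :=
  (FinVec.etaExpand_eq _).symm

lemma comp_eq_vec_four {α : Type*} (v : Fin 4 → α) (σ : Fin 4 → Fin 4) :
    v ∘ σ = ![v (σ 0), v (σ 1), v (σ 2), v (σ 3)] :=
  (FinVec.etaExpand_eq _).symm

lemma fact_xi_apply (ν : ℝ) (T : (Fin 3 → V) → ℝ) (x y z : V) :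
    fact (xi ν) T ![x, y, z] = (1 / 3) * (T ![x, y, z] + ν * T ![x, z, y] +
      (1 - ν) * T ![y, x, z] - ν * T ![y, z, x] + (ν - 1) * T ![z, x, y] - T ![z, y, x]) := by
  simp only [xi, fact_smul, fact_add, fact_sub, fact_single]
  simp [comp_eq_vec_three, Equiv.swap_apply_def]

lemma fact_astar_yt_apply (T : (Fin 4 → V) → ℝ) (a b c d : V) :
    fact (astar yt) T ![a, b, c, d] =
      T ![a, b, c, d] + T ![c, b, a, d] + T ![a, d, c, b] + T ![c, d, a, b] -
      (T ![b, a, c, d] + T ![c, a, b, d] + T ![b, d, c, a] + T ![c, d, b, a]) -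
      (T ![a, b, d, c] + T ![d, b, a, c] + T ![a, c, d, b] + T ![d, c, a, b]) +
      (T ![b, a, d, c] + T ![d, a, b, c] + T ![b, c, d, a] + T ![d, c, b, a]) := by
  simp only [yt, mul_add, add_mul, mul_sub, single_mul_single, one_mul, mul_one,
    astar_add, astar_sub, astar_single, fact_add, fact_sub, fact_single]
  simp [comp_eq_vec_four, Equiv.swap_apply_def]

lemma relation_of_gact_xi_half_eq {U : MultilinearMap ℝ (fun _ : Fin 3 => V) ℝ}
    (hU : gact (xi (1 / 2)) U = U) (x y z : V) :
    4 * U ![x, y, z] - U ![x, z, y] - U ![y, x, z] + U ![y, z, x] + U ![z, x, y] +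
      2 * U ![z, y, x] = 0 := by
  have h := DFunLike.congr_fun hU ![x, y, z]
  rw [gact_apply, fact_xi_apply] at h
  linear_combination (-6 : ℝ) * h

end

theorem stmt_13_general (V : Type) [AddCommGroup V] [Module ℝ V]
    (U : MultilinearMap ℝ (fun _ : Fin 3 => V) ℝ) (hU : gact (xi (1/2)) U = U)
    (w : V →ₗ[ℝ] ℝ) :
    ∀ v : Fin 4 → V,
      fact (astar yt) (fun v' => U ![v' 0, v' 1, v' 2] * w (v' 3)) v = 0 := by
  intro v
  obtain ⟨a, b, c, d, rfl⟩ : ∃ a b c d, v = ![a, b, c, d] :=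
    ⟨v 0, v 1, v 2, v 3, (FinVec.etaExpand_eq v).symm⟩
  have K := relation_of_gact_xi_half_eq hU
  rw [fact_astar_yt_apply]
  simp only [Matrix.cons_val_zero, Matrix.cons_val_one, Matrix.cons_val_two,
    Matrix.cons_val_three, Matrix.head_cons, Matrix.tail_cons]
  linear_combination
    (w d / 3) * (K a b c + K a c b - K b a c - K b c a) - (w b / 3) * (K a c d - K c d a) -
    (w c / 3) * (K a b d + K a d b - K b a d - K b d a) + (w a / 3) * (K b c d - K c d b)

/-- If `U : V³ → ℝ` is trilinear with `ξ_{1/2}·U = U`, then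
`y_t*(U⊗w) = 0` for every linear functional `w`. -/
theorem stmt_13 (V : Type) [AddCommGroup V] [Module ℝ V] [FiniteDimensional ℝ V]
    (U : MultilinearMap ℝ (fun _ : Fin 3 => V) ℝ) (hU : gact (xi (1/2)) U = U)
    (w : V →ₗ[ℝ] ℝ) :
    ∀ v : Fin 4 → V,
      fact (astar yt) (fun v' => U ![v' 0, v' 1, v' 2] * w (v' 3)) v = 0 :=
  stmt_13_general V U hU w
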